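/- Let (X,d) be a metric space and I : X → ℝ ∪ {+∞} a proper lower semicontinuous functional. If x ∈ D(I) is not a local minimum of I and the metric slope |∂I|(x) is finite, then the metric slope of the epigraph extension G_I on (epi(I), d_epi) at the point (x, I(x)) satisfies |∂G_I|(x, I(x)) = |∂I|(x)/√(1 + |∂I|(x)²). -/

import Mathlib

open Set Metric Filter
open scoped ENNReal Topology

/-- A point `x` is a `δ`-regular point of the (continuous) function `J`: there are a
neighbourhood `U` of `x`, a constant `α > 0` and a continuous map `ψ : U × [0,α] → Y` with
`d(ψ(u,t),u) ≤ t` and `J(u) - J(ψ(u,t)) ≥ δ t`. -/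
def IsDeltaRegular {Y : Type*} [MetricSpace Y] (J : Y → ℝ) (x : Y) (δ : ℝ) : Prop :=
  ∃ U ∈ 𝓝 x, ∃ α : ℝ, 0 < α ∧ ∃ ψ : Y → ℝ → Y,
    ContinuousOn (fun p : Y × ℝ => ψ p.1 p.2) (U ×ˢ Icc 0 α) ∧
    ∀ u ∈ U, ∀ t ∈ Icc (0:ℝ) α, dist (ψ u t) u ≤ t ∧ δ * t ≤ J u - J (ψ u t)

/-- The weak metric slope `|dJ|(x)` of a (continuous) function `J` at `x`: the supremum of all
`δ > 0` such that `x` is a `δ`-regular point of `J` (equal to `0` if there is no such `δ`). -/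
noncomputable def weakSlope {Y : Type*} [MetricSpace Y] (J : Y → ℝ) (x : Y) : ℝ≥0∞ :=
  ⨆ δ ∈ {δ : ℝ | 0 < δ ∧ IsDeltaRegular J x δ}, ENNReal.ofReal δ

/-- The weak metric Palais–Smale condition: every sequence along which `J` converges to a real
number and the weak metric slope tends to `0` has a convergent subsequence. -/
def WeakPalaisSmale {Y : Type*} [MetricSpace Y] (J : Y → ℝ) : Prop :=
  ∀ (u : ℕ → Y) (c : ℝ),
    Tendsto (fun n => J (u n)) atTop (𝓝 c) →
    Tendsto (fun n => weakSlope J (u n)) atTop (𝓝 0) →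
    ∃ (y : Y) (φ : ℕ → ℕ), StrictMono φ ∧ Tendsto (u ∘ φ) atTop (𝓝 y)

/-- The epigraph `epi(I) = {(u,ξ) : I(u) ≤ ξ}` of a functional `I : X → ℝ ∪ {+∞}`, equipped
(via `WithLp 2`) with the graph metric `d_epi((u,ξ),(v,ζ)) = √(d(u,v)² + |ξ-ζ|²)`. -/
abbrev Epi {X : Type*} [MetricSpace X] (I : X → EReal) : Type _ :=
  {p : WithLp 2 (X × ℝ) //
    I ((WithLp.equiv 2 (X × ℝ)) p).1 ≤ ((((WithLp.equiv 2 (X × ℝ)) p).2 : ℝ) : EReal)}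

/-- The point of an epigraph element `(u, ξ)` of the epigraph of `I`. -/
noncomputable def Epi.pt {X : Type*} [MetricSpace X] {I : X → EReal} (p : Epi I) : X :=
  ((WithLp.equiv 2 (X × ℝ)) p.1).1

/-- Build an element of the epigraph of `I` from `x : X` and `ξ : ℝ` with `I x ≤ ξ`. -/
noncomputable def Epi.mk' {X : Type*} [MetricSpace X] (I : X → EReal) (x : X) (ξ : ℝ)
    (h : I x ≤ (ξ : EReal)) : Epi I :=
  ⟨(WithLp.equiv 2 (X × ℝ)).symm (x, ξ), by simpa using h⟩

/-- The epigraph extension `G_I : epi(I) → ℝ`, `G_I(u,ξ) = ξ`. -/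
noncomputable def epiExt {X : Type*} [MetricSpace X] (I : X → EReal) (p : Epi I) : ℝ :=
  ((WithLp.equiv 2 (X × ℝ)) p.1).2

/-- The weak metric slope `|dI|(x)` of a proper lower semicontinuous functional
`I : X → ℝ ∪ {+∞}` at a point `x ∈ D(I)`, defined through the weak metric slope of the
epigraph extension `G_I` at `(x, I(x))`. -/
noncomputable def lscWeakSlope {X : Type*} [MetricSpace X] (I : X → EReal) (x : X) : ℝ≥0∞ :=
  if hx : I x ≤ (((I x).toReal : ℝ) : EReal) then
    let s := weakSlope (epiExt I) (Epi.mk' I x (I x).toReal hx)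
    if s < 1 then ENNReal.ofReal (s.toReal / Real.sqrt (1 - s.toReal ^ 2)) else ⊤
  else ⊤

/-- The weak metric Palais–Smale condition for a proper l.s.c. functional `I : X → ℝ ∪ {+∞}`. -/
def WeakPalaisSmaleLSC {X : Type*} [MetricSpace X] (I : X → EReal) : Prop :=
  ∀ (u : ℕ → X) (c : ℝ),
    Tendsto (fun n => I (u n)) atTop (𝓝 ((c : EReal))) →
    Tendsto (fun n => lscWeakSlope I (u n)) atTop (𝓝 0) →
    ∃ (y : X) (φ : ℕ → ℕ), StrictMono φ ∧ Tendsto (u ∘ φ) atTop (𝓝 y)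

/-- The (strong) metric slope `|∂J|(x) = limsup_{y → x} (J(x) - J(y))₊ / d(x,y)` of a
real-valued function. -/
noncomputable def metricSlopeReal {Y : Type*} [MetricSpace Y] (J : Y → ℝ) (x : Y) : ℝ≥0∞ :=
  limsup (fun y => ENNReal.ofReal (max (J x - J y) 0 / dist x y)) (𝓝[≠] x)

/-- The (strong) metric slope of a functional `I : X → ℝ ∪ {+∞}`, equal to `+∞` outside of the
domain of `I`. -/
noncomputable def metricSlope {X : Type*} [MetricSpace X] (I : X → EReal) (x : X) : ℝ≥0∞ :=
  if I x = ⊤ then ⊤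
  else limsup (fun y => ENNReal.ofReal ((max (I x - I y) 0).toReal / dist x y)) (𝓝[≠] x)

/-- `γ : [0,1] → Y` is a unit speed minimising geodesic from `x₀` to `x₁`. -/
def IsUnitSpeedGeodesic {Y : Type*} [MetricSpace Y] (γ : ℝ → Y) (x₀ x₁ : Y) : Prop :=
  ContinuousOn γ (Icc 0 1) ∧ γ 0 = x₀ ∧ γ 1 = x₁ ∧
    ∀ s ∈ Icc (0:ℝ) 1, ∀ t ∈ Icc (0:ℝ) 1, dist (γ s) (γ t) = |s - t| * dist x₀ x₁

/-- A geodesic metric space: any two points are joined by a unit speed minimising geodesic. -/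
def IsGeodesicSpace (Y : Type*) [MetricSpace Y] : Prop :=
  ∀ x₀ x₁ : Y, ∃ γ : ℝ → Y, IsUnitSpeedGeodesic γ x₀ x₁

/-- `I` is `λ`-geodesically convex. -/
def GeodesicallyConvex {X : Type*} [MetricSpace X] (I : X → EReal) (lam : ℝ) : Prop :=
  ∀ x₀ x₁ : X, I x₀ ≠ ⊤ → I x₁ ≠ ⊤ →
    ∀ γ : ℝ → X, IsUnitSpeedGeodesic γ x₀ x₁ → ∀ t ∈ Icc (0:ℝ) 1,
      I (γ t) ≤ ((1 - t : ℝ) : EReal) * I x₀ + ((t : ℝ) : EReal) * I x₁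
        - (((lam / 2) * t * (1 - t) * dist x₀ x₁ ^ 2 : ℝ) : EReal)

/-!
At `p = (x, ξ)`, `ξ = I x`, an epigraph point `(y, η)` with `η < ξ` lies at distance
`√(d² + (ξ - η)²)` from `p`, where `d = d(x, y)`, so the descent quotient of `G_I` towards
it is `sin (arctan ((ξ - η) / d))`. Since `I y ≤ η`, this is at most
`sin (arctan ((ξ - I y) / d))`, with equality on the graph `η = I y`. As `sin ∘ arctan` is
increasing and continuous, the limsup over the epigraph is
`sin (arctan |∂I|(x)) = |∂I|(x) / √(1 + |∂I|(x)²)`. Finiteness of `|∂I|(x)` is what makes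
the graph points realising the slope of `I` converge to `p` in the epigraph.
-/

open Real

theorem strictMono_sin_arctan : StrictMono fun r : ℝ => sin (arctan r) := fun a b hab =>
  strictMonoOn_sin (Ioo_subset_Icc_self (arctan_mem_Ioo a))
    (Ioo_subset_Icc_self (arctan_mem_Ioo b)) (arctan_strictMono hab)

theorem div_sqrt_sq_add_sq_eq_sin_arctan {d : ℝ} (hd : 0 < d) (t : ℝ) :
    t / √(d ^ 2 + t ^ 2) = sin (arctan (t / d)) := by
  have hsqrt : √(1 + (t / d) ^ 2) = √(d ^ 2 + t ^ 2) / d := by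
    rw [show 1 + (t / d) ^ 2 = (d ^ 2 + t ^ 2) / d ^ 2 by field_simp, sqrt_div' _ (sq_nonneg d),
      sqrt_sq hd.le]
  rw [sin_arctan, hsqrt, div_div_div_cancel_right₀ hd.ne']

theorem EReal.toReal_max_coe_sub_coe_zero (a b : ℝ) :
    (max ((a : EReal) - b) 0).toReal = max (a - b) 0 := by
  norm_cast

namespace Epi

variable {X : Type*} [MetricSpace X] {I : X → EReal}

theorem le_epiExt (q : Epi I) : I q.pt ≤ epiExt I q := q.2

theorem continuous_pt : Continuous (Epi.pt : Epi I → X) :=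
  (WithLp.continuous_fst 2 X ℝ).comp continuous_subtype_val

theorem dist_eq (p q : Epi I) :
    dist p q = √(dist p.pt q.pt ^ 2 + (epiExt I p - epiExt I q) ^ 2) := by
  rw [Subtype.dist_eq, WithLp.prod_dist_eq_add (by norm_num), sqrt_eq_rpow, ENNReal.toReal_ofNat,
    Real.dist_eq, ← sq_abs (epiExt I p - epiExt I q)]
  norm_cast

theorem dist_le (p q : Epi I) : dist p q ≤ dist p.pt q.pt + |epiExt I p - epiExt I q| := by
  rw [dist_eq]
  refine sqrt_le_iff.2 ⟨by positivity, ?_⟩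
  nlinarith [sq_abs (epiExt I p - epiExt I q), abs_nonneg (epiExt I p - epiExt I q),
    dist_nonneg (x := p.pt) (y := q.pt)]

theorem epiExt_sub_div_dist {p q : Epi I} (h : p.pt ≠ q.pt) :
    (epiExt I p - epiExt I q) / dist p q
      = sin (arctan ((epiExt I p - epiExt I q) / dist p.pt q.pt)) := by
  rw [dist_eq, div_sqrt_sq_add_sq_eq_sin_arctan (dist_pos.2 h)]

end Epi

section EpigraphSlope

variable {X : Type*} [MetricSpace X] {I : X → EReal}

noncomputable def descentQuotient (I : X → EReal) (x y : X) : ℝ≥0∞ :=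
  ENNReal.ofReal ((max (I x - I y) 0).toReal / dist x y)

theorem metricSlope_of_ne_top {x : X} (hx : I x ≠ ⊤) :
    metricSlope I x = limsup (descentQuotient I x) (𝓝[≠] x) :=
  if_neg hx

theorem descentQuotient_coe {x y : X} {ξ μ : ℝ} (hξ : I x = ξ) (hμ : I y = μ) :
    descentQuotient I x y = ENNReal.ofReal (max (ξ - μ) 0 / dist x y) := by
  rw [descentQuotient, hξ, hμ, EReal.toReal_max_coe_sub_coe_zero]

theorem exists_coe_lt_of_descentQuotient_pos (hbot : ∀ y, I y ≠ ⊥) {x y : X} {ξ : ℝ}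
    (hξ : I x = ξ) (h : 0 < descentQuotient I x y) : ∃ μ : ℝ, I y = μ ∧ μ < ξ := by
  obtain ⟨μ, hμ⟩ : ∃ μ : ℝ, I y = μ := by
    induction hy : I y using EReal.rec with
    | bot => exact absurd hy (hbot y)
    | top => simp [descentQuotient, hy, hξ] at h
    | coe μ => exact ⟨μ, rfl⟩
  refine ⟨μ, hμ, ?_⟩
  by_contra! hle
  rw [descentQuotient_coe hξ hμ, max_eq_right (by linarith), zero_div] at h
  exact h.ne' ENNReal.ofReal_zero

theorem metricSlopeReal_epiExt_le (hbot : ∀ y, I y ≠ ⊥) {x : X} {ξ : ℝ} (hξ : I x = ξ)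
    (hfin : metricSlope I x ≠ ⊤) {s : ℝ} (hs : (metricSlope I x).toReal < s) :
    metricSlopeReal (epiExt I) (Epi.mk' I x ξ hξ.le) ≤ ENNReal.ofReal (sin (arctan s)) := by
  set p := Epi.mk' I x ξ hξ.le
  have hs0 : 0 < s := ENNReal.toReal_nonneg.trans_lt hs
  rw [← ENNReal.ofReal_lt_ofReal_iff hs0, ENNReal.ofReal_toReal hfin,
    metricSlope_of_ne_top (by simp [hξ])] at hs
  have hdesc : ∀ᶠ q in 𝓝 p, q.pt ≠ x → descentQuotient I x q.pt < ENNReal.ofReal s :=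
    (Epi.continuous_pt.tendsto p).eventually
      (eventually_nhdsWithin_iff.1 (eventually_lt_of_limsup_lt hs))
  refine limsup_le_of_le (by isBoundedDefault)
    ((hdesc.filter_mono nhdsWithin_le_nhds).mono fun q hq => ?_)
  change ENNReal.ofReal (max (epiExt I p - epiExt I q) 0 / dist p q) ≤ _
  rcases le_or_gt ξ (epiExt I q) with hle | hlt
  · simp [max_eq_right (sub_nonpos.2 hle : epiExt I p - epiExt I q ≤ 0)]
  obtain ⟨μ, hμ⟩ : ∃ μ : ℝ, I q.pt = μ :=
    ⟨_, (EReal.coe_toReal (q.le_epiExt.trans_lt (EReal.coe_lt_top _)).ne (hbot _)).symm⟩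
  have hμη : μ ≤ epiExt I q := EReal.coe_le_coe_iff.1 (hμ ▸ q.le_epiExt)
  have hne : q.pt ≠ x := fun h => by
    rw [h, hξ, EReal.coe_eq_coe_iff] at hμ
    linarith
  have hd : 0 < dist x q.pt := dist_pos.2 hne.symm
  have hslope := hq hne
  rw [descentQuotient_coe hξ hμ, ENNReal.ofReal_lt_ofReal_iff hs0, div_lt_iff₀ hd] at hslope
  rw [max_eq_left (sub_nonneg.2 hlt.le : 0 ≤ epiExt I p - epiExt I q),
    Epi.epiExt_sub_div_dist (p := p) hne.symm]
  refine ENNReal.ofReal_le_ofReal (strictMono_sin_arctan.monotone ?_)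
  change (ξ - epiExt I q) / dist x q.pt ≤ s
  rw [div_le_iff₀ hd]
  linarith [le_max_left (ξ - μ) 0]

theorem le_metricSlopeReal_epiExt (hbot : ∀ y, I y ≠ ⊥) {x : X} {ξ : ℝ} (hξ : I x = ξ)
    (hfin : metricSlope I x ≠ ⊤) {s : ℝ} (hs : s < (metricSlope I x).toReal) :
    ENNReal.ofReal (sin (arctan s)) ≤ metricSlopeReal (epiExt I) (Epi.mk' I x ξ hξ.le) := by
  set p := Epi.mk' I x ξ hξ.le
  rcases lt_or_ge s 0 with hs0 | hs0
  · rw [ENNReal.ofReal_of_nonpos (sin_arctan_le_zero.2 hs0.le)]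
    exact zero_le
  set C := (metricSlope I x).toReal + 1
  have hlt : ENNReal.ofReal s < metricSlope I x := by
    rwa [← ENNReal.ofReal_toReal hfin, ENNReal.ofReal_lt_ofReal_iff_of_nonneg hs0]
  have hltC : metricSlope I x < ENNReal.ofReal C := by
    rw [← ENNReal.ofReal_toReal hfin, ENNReal.ofReal_lt_ofReal_iff (by positivity)]
    exact lt_add_one _
  rw [metricSlope_of_ne_top (by simp [hξ])] at hlt hltC
  refine le_limsup_of_frequently_le (frequently_iff.2 fun {U} hU => ?_) (by isBoundedDefault)
  obtain ⟨ε, hε, hεU⟩ := Metric.mem_nhdsWithin_iff.1 hU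
  have hnear : ∀ᶠ y in 𝓝[≠] x, y ∈ ball x (ε / (1 + C)) :=
    nhdsWithin_le_nhds (ball_mem_nhds x (by positivity))
  have hfreq := frequently_lt_of_lt_limsup (by isBoundedDefault) hlt
  obtain ⟨y, hsy, hyC, hyx⟩ :=
    (hfreq.and_eventually ((eventually_lt_of_limsup_lt hltC).and hnear)).exists
  obtain ⟨μ, hμ, hμξ⟩ := exists_coe_lt_of_descentQuotient_pos hbot hξ (pos_of_gt hsy)
  rw [descentQuotient_coe hξ hμ, max_eq_left (by linarith)] at hsy hyC
  set q := Epi.mk' I y μ hμ.le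
  have hne : p.pt ≠ q.pt := fun h => by
    have : I x = I y := congrArg I h
    rw [hξ, hμ, EReal.coe_eq_coe_iff] at this
    linarith
  have hd : 0 < dist x y := dist_pos.2 hne
  rw [ENNReal.ofReal_lt_ofReal_iff_of_nonneg hs0] at hsy
  rw [mem_ball'] at hyx
  rw [ENNReal.ofReal_lt_ofReal_iff (by positivity), div_lt_iff₀ hd] at hyC
  refine ⟨q, hεU ⟨?_, fun h => ?_⟩, ?_⟩
  · rw [mem_ball, dist_comm]
    calc dist p q ≤ dist x y + |ξ - μ| := Epi.dist_le p q
      _ < (1 + C) * dist x y := by rw [abs_of_pos (sub_pos.2 hμξ)]; linarith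
      _ < ε := by rwa [← lt_div_iff₀' (by positivity)]
  · have : μ = ξ := congrArg (epiExt I) h
    linarith
  · rw [max_eq_left (sub_nonneg.2 hμξ.le : 0 ≤ epiExt I p - epiExt I q),
      Epi.epiExt_sub_div_dist hne]
    exact ENNReal.ofReal_le_ofReal (strictMono_sin_arctan.monotone hsy.le)

end EpigraphSlope

theorem metricSlope_epiExt_eq_general {X : Type*} [MetricSpace X] (I : X → EReal)
    (hbot : ∀ x, I x ≠ ⊥)
    (x : X) (hx : I x ≠ ⊤)
    (hfin : metricSlope I x ≠ ⊤) :
    metricSlopeReal (epiExt I)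
        (Epi.mk' I x (I x).toReal (EReal.coe_toReal hx (hbot x)).ge)
      = ENNReal.ofReal
          ((metricSlope I x).toReal / Real.sqrt (1 + (metricSlope I x).toReal ^ 2)) := by
  have hξ : I x = (I x).toReal := (EReal.coe_toReal hx (hbot x)).symm
  set σ := (metricSlope I x).toReal
  have hφ : Continuous fun s : ℝ => ENNReal.ofReal (sin (arctan s)) :=
    ENNReal.continuous_ofReal.comp (by fun_prop)
  rw [← sin_arctan]
  apply le_antisymm
  · refine ge_of_tendsto ((hφ.tendsto σ).mono_left (nhdsWithin_le_nhds (s := Ioi σ))) ?_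
    exact eventually_nhdsWithin_of_forall fun s hs => metricSlopeReal_epiExt_le hbot hξ hfin hs
  · refine le_of_tendsto ((hφ.tendsto σ).mono_left (nhdsWithin_le_nhds (s := Iio σ))) ?_
    exact eventually_nhdsWithin_of_forall fun s hs => le_metricSlopeReal_epiExt hbot hξ hfin hs

/-- If `x ∈ D(I)` is not a local minimum of the proper l.s.c. functional `I` and the metric
slope `|∂I|(x)` is finite, then the metric slope of the epigraph extension `G_I` at `(x, I(x))`
equals `|∂I|(x)/√(1 + |∂I|(x)²)`. -/
theorem metricSlope_epiExt_eq {X : Type*} [MetricSpace X] (I : X → EReal)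
    (hproper : ∃ x, I x ≠ ⊤) (hbot : ∀ x, I x ≠ ⊥) (hlsc : LowerSemicontinuous I)
    (x : X) (hx : I x ≠ ⊤)
    (hnotmin : ¬ IsLocalMin I x)
    (hfin : metricSlope I x ≠ ⊤) :
    metricSlopeReal (epiExt I)
        (Epi.mk' I x (I x).toReal (EReal.coe_toReal hx (hbot x)).ge)
      = ENNReal.ofReal
          ((metricSlope I x).toReal / Real.sqrt (1 + (metricSlope I x).toReal ^ 2)) :=
  metricSlope_epiExt_eq_general I hbot x hx hfin
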